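/- arXiv:math/0512402 — 2 statements merged into one kernel-verified Lean document; each statement's English description precedes it below -/
import Mathlib

section
/- For any c ∈ ℝ^n, the descent set of 𝒜(c) is contained in the descent set of c, where 𝒜 averages over ascending runs. -/
open scoped Classical

/-- The set of indices lying in the same ascending run of `c` as `i`:
all `j` such that every consecutive step between `i` and `j` is a weak ascent. -/
noncomputable def runBlock {n : ℕ} (c : Fin n → ℝ) (i : Fin n) : Finset (Fin n) :=
  Finset.univ.filter (fun j =>
    ∀ (k : ℕ) (h1 : k < n) (h2 : k + 1 < n),
      min i.val j.val ≤ k → k + 1 ≤ max i.val j.val → c ⟨k, h1⟩ ≤ c ⟨k + 1, h2⟩)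

/-- The averaging map `𝒜`: replace each entry of `c` by the arithmetic mean of
the entries of the ascending run containing it. -/
noncomputable def avgMap {n : ℕ} (c : Fin n → ℝ) : Fin n → ℝ :=
  fun i => (∑ j ∈ runBlock c i, c j) / (runBlock c i).card

/-- The descent set of `c`: indices `k` with `c k > c (k+1)`. -/
def descents {n : ℕ} (c : Fin n → ℝ) : Set ℕ :=
  {k | ∃ (h1 : k < n) (h2 : k + 1 < n), c ⟨k + 1, h2⟩ < c ⟨k, h1⟩}

lemma runBlock_succ_eq {n : ℕ} (c : Fin n → ℝ) (k : ℕ) (h1 : k < n) (h2 : k + 1 < n)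
    (hck : c ⟨k, h1⟩ ≤ c ⟨k + 1, h2⟩) :
    runBlock c ⟨k, h1⟩ = runBlock c ⟨k + 1, h2⟩ := by
  ext j
  simp only [runBlock, Finset.mem_filter, Finset.mem_univ, true_and]
  constructor
  · intro H m hm1 hm2 hmin hmax
    by_cases hm : m = k
    · subst hm; exact hck
    · exact H m hm1 hm2 (by omega) (by omega)
  · intro H m hm1 hm2 hmin hmax
    by_cases hm : m = k
    · subst hm; exact hck
    · exact H m hm1 hm2 (by omega) (by omega)

/-- `Des(𝒜(c)) ⊆ Des(c)`. -/
theorem descents_avgMap_subset (n : ℕ) (c : Fin n → ℝ) :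
    descents (avgMap c) ⊆ descents c := by
  intro k hk
  obtain ⟨h1, h2, hlt⟩ := hk
  refine ⟨h1, h2, ?_⟩
  by_contra hc
  push_neg at hc
  have heq := runBlock_succ_eq c k h1 h2 hc
  have : avgMap c ⟨k, h1⟩ = avgMap c ⟨k + 1, h2⟩ := by
    simp [avgMap, heq]
  rw [this] at hlt
  exact lt_irrefl _ hlt
end

section
/- Let TD(n) denote the set of threshold partitions d = (d_1,...,d_n) with d_1 = n−1, and for d ∈ TD(n) let m(d) be the largest index j with d_j = n−1. Then Σ_{d ∈ TD(n)} m(d) = 2^{n−1} for n ≥ 1. -/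
open scoped Classical in
/-- The degree of vertex `v` in the simple graph `G` on `[n]`. -/
noncomputable def degC {n : ℕ} (G : SimpleGraph (Fin n)) (v : Fin n) : ℕ :=
  (Finset.univ.filter (fun w => G.Adj v w)).card

/-- A graph is threshold if every (nonempty) induced subgraph has a
dominating or an isolated vertex. -/
def IsThreshold {n : ℕ} (G : SimpleGraph (Fin n)) : Prop :=
  ∀ S : Finset (Fin n), S.Nonempty →
    ∃ v ∈ S, (∀ w ∈ S, w ≠ v → G.Adj v w) ∨ (∀ w ∈ S, ¬ G.Adj v w)

/-- `d` is a threshold partition of length `n`: the weakly decreasing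
rearrangement of the degree sequence of a threshold graph on `n` vertices. -/
def IsThresholdPartition (n : ℕ) (d : Fin n → ℕ) : Prop :=
  Antitone d ∧ ∃ G : SimpleGraph (Fin n), IsThreshold G ∧
    ∃ σ : Equiv.Perm (Fin n), ∀ i, d i = degC G (σ i)

/-!
Label a threshold graph so that vertex `i` has degree `d i`. Then `d 0 = n - 1` says that
vertex `0` is dominating and `d (n - 1) = 0` that the last vertex is isolated, and deleting that
vertex identifies such `d` with the threshold partitions `e` of length `n - 1`, as
`d = (n - 1, e + 1)` resp. `d = (e, 0)`. For `n ≥ 2` exactly one of the two cases occurs, so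
there are `2 ^ (n - 1)` threshold partitions of length `n`. The entries of `(n - 1, e + 1)` equal
to `n - 1` are its head and one for each entry `n - 2` of `e`; since `e` is antitone there are none
unless `e` starts with `n - 2`. So the sum `S n` of the theorem satisfies
`S n = 2 ^ (n - 2) + S (n - 1)`, with `S 1 = 1`.
-/

open Finset

section Degrees

open scoped Classical

variable {n : ℕ}

theorem degC_eq_sum (G : SimpleGraph (Fin n)) (v : Fin n) :
    degC G v = ∑ w, if G.Adj v w then 1 else 0 := by
  rw [degC, card_filter]

theorem degC_lt (G : SimpleGraph (Fin n)) (v : Fin n) : degC G v < n := by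
  rw [degC]
  simpa using card_lt_univ_of_notMem (s := univ.filter (G.Adj v)) (x := v) (by simp)

theorem degC_comap_equiv (G : SimpleGraph (Fin n)) (σ : Equiv.Perm (Fin n)) (v : Fin n) :
    degC (G.comap σ) v = degC G (σ v) := by
  simp only [degC_eq_sum, SimpleGraph.comap_adj]
  exact Equiv.sum_comp σ fun w => if G.Adj (σ v) w then 1 else 0

theorem degC_succAbove (G : SimpleGraph (Fin (n + 1))) (v : Fin (n + 1)) (a : Fin n) :
    degC G (v.succAbove a) =
      (if G.Adj (v.succAbove a) v then 1 else 0) + degC (G.comap v.succAbove) a := by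
  simp only [degC_eq_sum, Fin.sum_univ_succAbove _ v, SimpleGraph.comap_adj]

theorem degC_eq_iff_forall_adj {G : SimpleGraph (Fin (n + 1))} {v : Fin (n + 1)} :
    degC G v = n ↔ ∀ w, w ≠ v → G.Adj v w := by
  have hle : ∀ a ∈ univ, (if G.Adj v (v.succAbove a) then 1 else 0) ≤ 1 := fun _ _ => by
    split_ifs <;> omega
  rw [degC_eq_sum, Fin.sum_univ_succAbove _ v, if_neg (G.irrefl (v := v)), zero_add]
  constructor
  · intro h w hw
    obtain ⟨a, rfl⟩ := Fin.exists_succAbove_eq hw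
    have hall := (sum_eq_sum_iff_of_le hle).1 (by simpa using h) a (mem_univ a)
    by_contra hadj
    simp [hadj] at hall
  · intro h
    simp [h _ (Fin.succAbove_ne v _)]

theorem degC_eq_zero_iff {G : SimpleGraph (Fin n)} {v : Fin n} :
    degC G v = 0 ↔ ∀ w, ¬ G.Adj v w := by
  simp [degC, filter_eq_empty_iff]

end Degrees

theorem IsThreshold.comap {m n : ℕ} {G : SimpleGraph (Fin n)} (hG : IsThreshold G)
    {f : Fin m → Fin n} (hf : Function.Injective f) : IsThreshold (G.comap f) := by
  intro S hS
  obtain ⟨u, hu, hdom | hiso⟩ := hG (S.image f) (hS.image f)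
  all_goals obtain ⟨a, ha, rfl⟩ := mem_image.1 hu
  · exact ⟨a, ha, Or.inl fun w hw hwa => hdom (f w) (mem_image_of_mem f hw) (hf.ne hwa)⟩
  · exact ⟨a, ha, Or.inr fun w hw => hiso (f w) (mem_image_of_mem f hw)⟩

theorem IsThreshold.of_comap_succAbove {n : ℕ} {G : SimpleGraph (Fin (n + 1))}
    {v : Fin (n + 1)} (hv : (∀ w, w ≠ v → G.Adj v w) ∨ ∀ w, ¬ G.Adj v w)
    (hG : IsThreshold (G.comap v.succAbove)) : IsThreshold G := by
  intro S hS
  by_cases hvS : v ∈ S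
  · exact ⟨v, hvS, hv.imp (fun h w _ => h w) (fun h w _ => h w)⟩
  have hS_sub : ∀ w ∈ S, ∃ b ∈ S.preimage v.succAbove Fin.succAbove_right_injective.injOn,
      v.succAbove b = w := by
    intro w hw
    obtain ⟨b, rfl⟩ := Fin.exists_succAbove_eq (ne_of_mem_of_not_mem hw hvS)
    exact ⟨b, by simpa using hw, rfl⟩
  obtain ⟨s, hs⟩ := hS
  obtain ⟨a, ha, hdom | hiso⟩ := hG _ ((hS_sub s hs).imp fun b hb => hb.1)
  all_goals refine ⟨v.succAbove a, by simpa using ha, ?_⟩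
  · refine Or.inl fun w hw hwa => ?_
    obtain ⟨b, hb, rfl⟩ := hS_sub w hw
    exact hdom b hb (fun hba => hwa (congrArg _ hba))
  · refine Or.inr fun w hw => ?_
    obtain ⟨b, hb, rfl⟩ := hS_sub w hw
    exact hiso b hb

section Antitone

variable {α : Type*} [Preorder α] {n : ℕ}

theorem Fin.antitone_cons_iff {f : Fin n → α} {a : α} :
    Antitone (Fin.cons a f : Fin (n + 1) → α) ↔ (∀ i, f i ≤ a) ∧ Antitone f := by
  rw [antitone_iff_forall_lt, antitone_iff_forall_lt]
  exact Fin.liftFun_cons (· ≥ ·)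

theorem Fin.antitone_snoc_iff {f : Fin n → α} {a : α} :
    Antitone (Fin.snoc f a : Fin (n + 1) → α) ↔ (∀ i, a ≤ f i) ∧ Antitone f := by
  constructor
  · intro h
    refine ⟨fun i => ?_, fun i j hij => ?_⟩
    · simpa using h (Fin.castSucc_lt_last i).le
    · simpa using h (Fin.castSucc_le_castSucc_iff.2 hij)
  · rintro ⟨ha, hf⟩ i j hij
    induction j using Fin.lastCases with
    | last =>
      induction i using Fin.lastCases with
      | last => exact le_rfl
      | cast i => simpa using ha i
    | cast j =>
      induction i using Fin.lastCases with
      | last => exact absurd hij (Fin.castSucc_lt_last j).not_ge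
      | cast i => simpa using hf (Fin.castSucc_le_castSucc_iff.1 hij)

end Antitone

section Partitions

variable {m n : ℕ}

theorem degC_eq_cons_of_forall_adj_zero {G : SimpleGraph (Fin (m + 1))}
    (h : ∀ w, w ≠ 0 → G.Adj 0 w) :
    degC G = Fin.cons m (fun a => degC (G.comap Fin.succ) a + 1) := by
  rw [← Fin.cons_self_tail (degC G), degC_eq_iff_forall_adj.2 h]
  congr 1
  funext a
  rw [Fin.tail, ← Fin.succAbove_zero, degC_succAbove,
    if_pos (h _ (Fin.succAbove_ne 0 a)).symm, add_comm]

theorem degC_eq_snoc_of_forall_not_adj_last {G : SimpleGraph (Fin (m + 1))}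
    (h : ∀ w, ¬ G.Adj (Fin.last m) w) :
    degC G = Fin.snoc (degC (G.comap Fin.castSucc)) 0 := by
  rw [← Fin.snoc_init_self (degC G), degC_eq_zero_iff.2 h]
  congr 1
  funext a
  rw [Fin.init, ← Fin.succAbove_last, degC_succAbove, if_neg fun hadj => h _ hadj.symm,
    zero_add]

theorem exists_comap_succ_eq_of_forall_adj_zero (H : SimpleGraph (Fin m)) :
    ∃ G : SimpleGraph (Fin (m + 1)), (∀ w, w ≠ 0 → G.Adj 0 w) ∧ G.comap Fin.succ = H := by
  -- `H` plus a dominating vertex is the complement of `Hᶜ` plus an isolated vertex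
  refine ⟨((Hᶜ).map (Fin.succEmb m))ᶜ, fun w hw => ?_, ?_⟩
  · simp only [SimpleGraph.compl_adj, SimpleGraph.map_adj]
    simp [hw.symm]
  · ext a b
    change a.succ ≠ b.succ ∧
      ¬(Hᶜ.map (Fin.succEmb m)).Adj (Fin.succEmb m a) (Fin.succEmb m b) ↔ _
    rw [SimpleGraph.map_adj_apply, SimpleGraph.compl_adj, Ne, Fin.succ_inj]
    exact ⟨fun h => not_not.1 (not_and.1 h.2 h.1),
      fun h => ⟨H.ne_of_adj h, fun h' => h'.2 h⟩⟩

theorem exists_comap_castSucc_eq_of_forall_not_adj_last (H : SimpleGraph (Fin m)) :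
    ∃ G : SimpleGraph (Fin (m + 1)), (∀ w, ¬ G.Adj (Fin.last m) w) ∧
      G.comap Fin.castSucc = H := by
  refine ⟨H.map Fin.castSuccEmb, fun w => ?_, SimpleGraph.comap_map_eq Fin.castSuccEmb H⟩
  simp only [SimpleGraph.map_adj]
  simp [Fin.castSucc_ne_last]

theorem isThresholdPartition_iff {d : Fin n → ℕ} :
    IsThresholdPartition n d ↔
      Antitone d ∧ ∃ G : SimpleGraph (Fin n), IsThreshold G ∧ degC G = d := by
  refine and_congr_right fun _ => ⟨?_, ?_⟩
  · rintro ⟨G, hG, σ, hσ⟩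
    exact ⟨G.comap σ, hG.comap σ.injective, funext fun i => by rw [degC_comap_equiv, hσ]⟩
  · rintro ⟨G, hG, rfl⟩
    exact ⟨G, hG, 1, fun _ => rfl⟩

theorem IsThresholdPartition.lt {d : Fin n → ℕ} (h : IsThresholdPartition n d) (i : Fin n) :
    d i < n := by
  obtain ⟨-, G, -, rfl⟩ := isThresholdPartition_iff.1 h
  exact degC_lt G i

theorem isThresholdPartition_succ_and_head_iff {d : Fin (m + 1) → ℕ} :
    IsThresholdPartition (m + 1) d ∧ d 0 = m ↔
      ∃ e, IsThresholdPartition m e ∧ Fin.cons m (fun i => e i + 1) = d := by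
  simp only [isThresholdPartition_iff]
  constructor
  · rintro ⟨⟨hd, G, hG, rfl⟩, h0⟩
    have hdeg := degC_eq_cons_of_forall_adj_zero (degC_eq_iff_forall_adj.1 h0)
    rw [hdeg, Fin.antitone_cons_iff] at hd
    exact ⟨_, ⟨fun a b hab => Nat.le_of_succ_le_succ (hd.2 hab), _,
      hG.comap (Fin.succ_injective m), rfl⟩, hdeg.symm⟩
  · rintro ⟨e, ⟨he, H, hH, rfl⟩, rfl⟩
    obtain ⟨G, hdom, hcomap⟩ := exists_comap_succ_eq_of_forall_adj_zero H
    have hdeg := degC_eq_cons_of_forall_adj_zero hdom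
    rw [hcomap] at hdeg
    refine ⟨⟨?_, G, ?_, hdeg⟩, rfl⟩
    · exact Fin.antitone_cons_iff.2 ⟨degC_lt H, fun a b hab => Nat.succ_le_succ (he hab)⟩
    · refine IsThreshold.of_comap_succAbove (v := 0) (Or.inl hdom) ?_
      rwa [Fin.succAbove_zero, hcomap]

theorem isThresholdPartition_succ_and_last_iff {d : Fin (m + 1) → ℕ} :
    IsThresholdPartition (m + 1) d ∧ d (Fin.last m) = 0 ↔
      ∃ e, IsThresholdPartition m e ∧ Fin.snoc e 0 = d := by
  simp only [isThresholdPartition_iff]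
  constructor
  · rintro ⟨⟨hd, G, hG, rfl⟩, h0⟩
    have hdeg := degC_eq_snoc_of_forall_not_adj_last (degC_eq_zero_iff.1 h0)
    rw [hdeg, Fin.antitone_snoc_iff] at hd
    exact ⟨_, ⟨hd.2, _, hG.comap (Fin.castSucc_injective m), rfl⟩, hdeg.symm⟩
  · rintro ⟨e, ⟨he, H, hH, rfl⟩, rfl⟩
    obtain ⟨G, hiso, hcomap⟩ := exists_comap_castSucc_eq_of_forall_not_adj_last H
    have hdeg := degC_eq_snoc_of_forall_not_adj_last hiso
    rw [hcomap] at hdeg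
    refine ⟨⟨?_, G, ?_, hdeg⟩, by simp⟩
    · exact Fin.antitone_snoc_iff.2 ⟨fun _ => Nat.zero_le _, he⟩
    · refine IsThreshold.of_comap_succAbove (v := Fin.last m) (Or.inr hiso) ?_
      rwa [Fin.succAbove_last, hcomap]

theorem IsThresholdPartition.head_or_last {d : Fin (m + 1) → ℕ}
    (h : IsThresholdPartition (m + 1) d) : d 0 = m ∨ d (Fin.last m) = 0 := by
  obtain ⟨hd, G, hG, rfl⟩ := isThresholdPartition_iff.1 h
  obtain ⟨v, -, hdom | hiso⟩ := hG univ univ_nonempty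
  · have hv := degC_eq_iff_forall_adj.2 fun w hw => hdom w (mem_univ w) hw
    have hle := hd (Fin.zero_le v)
    have hlt := degC_lt G 0
    omega
  · have hv := degC_eq_zero_iff.2 fun w => hiso w (mem_univ w)
    have hle := hd (Fin.le_last v)
    omega

theorem IsThresholdPartition.last_ne_zero_of_head {d : Fin (m + 2) → ℕ}
    (h : IsThresholdPartition (m + 2) d) (h0 : d 0 = m + 1) : d (Fin.last (m + 1)) ≠ 0 := by
  obtain ⟨e, -, rfl⟩ := isThresholdPartition_succ_and_head_iff.1 ⟨h, h0⟩
  rw [← Fin.succ_last, Fin.cons_succ]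
  omega

end Partitions

section Counting

open scoped Classical

noncomputable def thresholdCodes (n : ℕ) : Finset (Fin n → Fin n) :=
  {d | IsThresholdPartition n fun i => (d i : ℕ)}

def consTop (m : ℕ) : (Fin m → Fin m) ↪ (Fin (m + 1) → Fin (m + 1)) where
  toFun e := Fin.cons (Fin.last m) (Fin.succ ∘ e)
  inj' := (Fin.cons_right_injective _).comp (Fin.succ_injective m).comp_left

def snocZero (m : ℕ) : (Fin m → Fin m) ↪ (Fin (m + 1) → Fin (m + 1)) where
  toFun e := Fin.snoc (Fin.castSucc ∘ e) 0
  inj' := (Fin.snoc_injective2.left 0).comp (Fin.castSucc_injective m).comp_left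

theorem val_consTop {m : ℕ} (e : Fin m → Fin m) :
    (fun i => (consTop m e i : ℕ)) = Fin.cons m (fun i => (e i : ℕ) + 1) := by
  funext i
  cases i using Fin.cases <;> simp [consTop]

theorem val_snocZero {m : ℕ} (e : Fin m → Fin m) :
    (fun i => (snocZero m e i : ℕ)) = Fin.snoc (fun i => (e i : ℕ)) 0 := by
  funext i
  cases i using Fin.lastCases <;> simp [snocZero]

theorem thresholdCodes_filter_head (m : ℕ) :
    (thresholdCodes (m + 1)).filter (fun d => (d 0 : ℕ) = m) =
      (thresholdCodes m).map (consTop m) := by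
  ext d
  simp only [thresholdCodes, mem_filter, mem_univ, true_and, mem_map]
  rw [isThresholdPartition_succ_and_head_iff]
  constructor
  · rintro ⟨e, he, hd⟩
    exact ⟨fun i => ⟨e i, he.lt i⟩, he,
      Fin.val_injective.comp_left ((val_consTop _).trans hd)⟩
  · rintro ⟨e, he, rfl⟩
    exact ⟨_, he, (val_consTop e).symm⟩

theorem thresholdCodes_filter_last (m : ℕ) :
    (thresholdCodes (m + 1)).filter (fun d => (d (Fin.last m) : ℕ) = 0) =
      (thresholdCodes m).map (snocZero m) := by
  ext d
  simp only [thresholdCodes, mem_filter, mem_univ, true_and, mem_map]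
  rw [isThresholdPartition_succ_and_last_iff]
  constructor
  · rintro ⟨e, he, hd⟩
    exact ⟨fun i => ⟨e i, he.lt i⟩, he,
      Fin.val_injective.comp_left ((val_snocZero _).trans hd)⟩
  · rintro ⟨e, he, rfl⟩
    exact ⟨_, he, (val_snocZero e).symm⟩

theorem card_thresholdCodes_zero : #(thresholdCodes 0) = 1 := by
  have hmem : ∀ d : Fin 0 → Fin 0, d ∈ thresholdCodes 0 := fun d =>
    mem_filter.2 ⟨mem_univ d, isThresholdPartition_iff.2
      ⟨fun i => i.elim0, ⊥, fun _ ⟨v, _⟩ => v.elim0, funext fun i => i.elim0⟩⟩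
  rw [eq_univ_of_forall hmem]
  simp

theorem card_thresholdCodes_succ_succ (m : ℕ) :
    #(thresholdCodes (m + 2)) = 2 * #(thresholdCodes (m + 1)) := by
  have hsplit : (thresholdCodes (m + 2)).filter (fun d => ¬ (d 0 : ℕ) = m + 1) =
      (thresholdCodes (m + 2)).filter (fun d => (d (Fin.last (m + 1)) : ℕ) = 0) := by
    refine filter_congr fun d hd => ?_
    have hd := (mem_filter.1 hd).2
    exact ⟨hd.head_or_last.resolve_left, fun h0 hhead => hd.last_ne_zero_of_head hhead h0⟩
  rw [← card_filter_add_card_filter_not (fun d => (d 0 : ℕ) = m + 1), hsplit,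
    thresholdCodes_filter_head, thresholdCodes_filter_last, card_map, card_map, two_mul]

theorem card_thresholdCodes_succ (m : ℕ) : #(thresholdCodes (m + 1)) = 2 ^ m := by
  induction m with
  | zero =>
    have hall : (thresholdCodes 1).filter (fun d => (d 0 : ℕ) = 0) = thresholdCodes 1 :=
      filter_true_of_mem fun d _ => by simp
    rw [← hall, thresholdCodes_filter_head, card_map, card_thresholdCodes_zero, pow_zero]
  | succ m ih => rw [card_thresholdCodes_succ_succ, ih, pow_succ, mul_comm]

theorem card_filter_consTop_eq_top {m : ℕ} (e : Fin m → Fin m) :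
    #{j | (consTop m e j : ℕ) = m} = #{j | (e j : ℕ) + 1 = m} + 1 := by
  simp only [card_filter, Fin.sum_univ_succ]
  simp [consTop, add_comm]

theorem head_eq_of_val_eq_top {m : ℕ} {d : Fin (m + 1) → Fin (m + 1)}
    (hd : d ∈ thresholdCodes (m + 1)) {j : Fin (m + 1)} (hj : (d j : ℕ) = m) :
    (d 0 : ℕ) = m := by
  have hle : (d j : ℕ) ≤ d 0 := (mem_filter.1 hd).2.1 (Fin.zero_le j)
  have hlt := (d 0).isLt
  omega

theorem sum_card_top_eq_sum_add_card (m : ℕ) :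
    ∑ d ∈ (thresholdCodes (m + 1)).filter (fun d => (d 0 : ℕ) = m), #{j | (d j : ℕ) = m} =
      ∑ e ∈ thresholdCodes m, #{j | (e j : ℕ) + 1 = m} + #(thresholdCodes m) := by
  rw [thresholdCodes_filter_head, sum_map, card_eq_sum_ones, ← sum_add_distrib]
  exact sum_congr rfl fun e _ => card_filter_consTop_eq_top e

theorem sum_card_top (m : ℕ) :
    ∑ d ∈ (thresholdCodes (m + 1)).filter (fun d => (d 0 : ℕ) = m), #{j | (d j : ℕ) = m} =
      2 ^ m := by
  induction m with
  | zero =>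
    rw [sum_card_top_eq_sum_add_card, card_thresholdCodes_zero]
    simp
  | succ m ih =>
    have hhead :
        ∀ d ∈ thresholdCodes (m + 1), #{j | (d j : ℕ) = m} ≠ 0 → (d 0 : ℕ) = m := by
      intro d hd hne
      obtain ⟨j, hj⟩ := card_ne_zero.1 hne
      exact head_eq_of_val_eq_top hd (mem_filter.1 hj).2
    simp only [sum_card_top_eq_sum_add_card, Nat.add_right_cancel_iff,
      ← sum_filter_of_ne hhead, ih, card_thresholdCodes_succ, pow_succ, mul_two]

end Counting

open scoped Classical in
/-- summing, over all threshold partitions `d` of length `n` with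
`d 1 = n - 1` (all of whose entries lie in `{0, …, n-1}`, encoded as `Fin n`),
the largest index (1-based) at which `d` takes the value `n-1` — equivalently,
since `d` is weakly decreasing, the number of indices at which `d` equals
`n - 1` — gives `2^(n-1)`. -/
theorem sum_num_dominating_vertices (n : ℕ) (hn : 1 ≤ n) :
    ∑ d ∈ Finset.univ.filter
        (fun d : Fin n → Fin n =>
          IsThresholdPartition n (fun i => (d i : ℕ)) ∧ (d ⟨0, hn⟩ : ℕ) = n - 1),
      (Finset.univ.filter (fun j : Fin n => (d j : ℕ) = n - 1)).card
      = 2 ^ (n - 1) := by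
  obtain ⟨m, rfl⟩ := Nat.exists_eq_add_of_le' hn
  simpa [thresholdCodes, filter_filter] using sum_card_top m
end
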